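/- arXiv:1702.08125 — 2 statements merged into one kernel-verified Lean document; each statement's English description precedes it below -/
import Mathlib

section
/- For every k ≥ 1, det(P_k) = C_{3k−2} + Σ_{j=0}^{k−2} C_{2+3j} · det(P_{k−j−1}), where det(P_0) is interpreted as 1 and the sum is empty when k = 1. Here P_k is the k×k integer matrix with entries p_{i,j} = C_{3(j−i)+2} if i ≤ j < k, p_{i,k} = C_{3(k−i)+1} for 1 ≤ i ≤ k, p_{i,j} = −1 if j = i−1, and p_{i,j} = 0 if j < i−1. -/
open Finset

/-- The matrix `M_k`: `m_{i,j} = C_{3(j-i)+2}` for `j ≥ i`, `-1` on the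
subdiagonal, `0` below the subdiagonal. -/
def Mmat (k : ℕ) : Matrix (Fin k) (Fin k) ℤ :=
  Matrix.of fun i j =>
    if i.1 ≤ j.1 then (catalan (3 * (j.1 - i.1) + 2) : ℤ)
    else if j.1 + 1 = i.1 then -1 else 0

/-- The matrix `P_k`: obtained from `M_k` by replacing the last column by
`p_{i,k} = C_{3(k-i)+1}` (1-indexed). -/
def Pmat (k : ℕ) : Matrix (Fin k) (Fin k) ℤ :=
  Matrix.of fun i j =>
    if j.1 = k - 1 then (catalan (3 * (k - 1 - i.1) + 1) : ℤ)
    else if i.1 ≤ j.1 then (catalan (3 * (j.1 - i.1) + 2) : ℤ)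
    else if j.1 + 1 = i.1 then -1 else 0

def Qmat (n s : ℕ) : Matrix (Fin n) (Fin n) ℤ :=
  Matrix.of fun i j =>
    if i.1 = 0 then
      if j.1 = n - 1 then (catalan (3 * (n - 1 + s) + 1) : ℤ)
      else (catalan (3 * (j.1 + s) + 2) : ℤ)
    else Pmat n i j

lemma Qmat_zero (n : ℕ) : Qmat n 0 = Pmat n := by
  ext i j
  have hj := j.isLt
  have hi := i.isLt
  simp only [Qmat, Pmat, Matrix.of_apply]
  split_ifs <;> first | rfl | omega | (congr 2 <;> omega)

lemma Qmat_one (s : ℕ) : (Qmat 1 s).det = (catalan (3 * s + 1) : ℤ) := by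
  rw [Matrix.det_fin_one]
  simp only [Qmat, Matrix.of_apply, Fin.val_zero]
  norm_num

lemma sub0 (m s : ℕ) :
    (Qmat (m + 2) s).submatrix Fin.succ Fin.succ = Pmat (m + 1) := by
  ext i j
  have hj := j.isLt
  have hi := i.isLt
  simp only [Matrix.submatrix_apply, Qmat, Pmat, Matrix.of_apply, Fin.val_succ]
  rw [if_neg (by omega : ¬ i.1 + 1 = 0)]
  split_ifs <;> first | rfl | omega | (congr 2 <;> omega)

lemma sub1 (m s : ℕ) :
    (Qmat (m + 2) s).submatrix (Fin.succAbove 1) Fin.succ = Qmat (m + 1) (s + 1) := by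
  ext i j
  have hj := j.isLt
  have hi := i.isLt
  simp only [Matrix.submatrix_apply, Qmat, Pmat, Matrix.of_apply, Fin.val_succ]
  rcases Nat.eq_zero_or_pos i.1 with h0 | h0
  · have hv : ((Fin.succAbove 1 i) : ℕ) = 0 := by
      simp [Fin.succAbove, Fin.lt_def, h0, Fin.castSucc, Fin.castAdd, Fin.castLE]
    rw [hv]
    rw [if_pos rfl, if_pos h0]
    split_ifs <;> first | rfl | omega | (congr 2 <;> omega)
  · have hv : ((Fin.succAbove 1 i) : ℕ) = i.1 + 1 := by
      rw [Fin.succAbove_of_le_castSucc _ _ (by rw [Fin.le_def]; simp; omega)]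
      rfl
    rw [hv]
    rw [if_neg (by omega : ¬ i.1 + 1 = 0), if_neg (by omega : ¬ i.1 = 0)]
    split_ifs <;> first | rfl | omega | (congr 2 <;> omega)

lemma Qmat_rec (m s : ℕ) :
    (Qmat (m + 2) s).det =
      (catalan (3 * s + 2) : ℤ) * (Pmat (m + 1)).det + (Qmat (m + 1) (s + 1)).det := by
  rw [Matrix.det_succ_column_zero]
  rw [Fin.sum_univ_succ, Fin.sum_univ_succ]
  have e00 : (Qmat (m + 2) s) 0 0 = (catalan (3 * s + 2) : ℤ) := by
    simp only [Qmat, Matrix.of_apply, Fin.val_zero]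
    norm_num
  have e10 : (Qmat (m + 2) s) (Fin.succ 0) 0 = -1 := by
    simp only [Qmat, Pmat, Matrix.of_apply, Fin.val_succ, Fin.val_zero]
    norm_num
  have ezero : ∀ i : Fin m, (Qmat (m + 2) s) i.succ.succ 0 = 0 := by
    intro i
    simp [Qmat, Pmat]
  have hsum : ∑ i : Fin m, (-1 : ℤ) ^ (((i.succ.succ : Fin (m+2))) : ℕ) *
      (Qmat (m + 2) s) i.succ.succ 0 *
      ((Qmat (m + 2) s).submatrix (Fin.succAbove i.succ.succ) Fin.succ).det = 0 := by
    apply Finset.sum_eq_zero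
    intro i _
    rw [ezero i]
    ring
  rw [hsum, e00, e10]
  have hA : (0 : Fin (m+2)).succAbove = Fin.succ := Fin.succAbove_zero
  have hB : (Fin.succ (0 : Fin (m+1))) = (1 : Fin (m+2)) := rfl
  rw [hA, sub0, hB, sub1]
  simp

lemma detQ (n : ℕ) : ∀ s : ℕ,
    (Qmat (n + 1) s).det =
      (catalan (3 * (n + s) + 1) : ℤ) +
        ∑ j ∈ Finset.range n, (catalan (3 * (s + j) + 2) : ℤ) * (Pmat (n - j)).det := by
  induction n with
  | zero => intro s; rw [Qmat_one]; norm_num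
  | succ n ih =>
    intro s
    rw [Qmat_rec, ih (s + 1), Finset.sum_range_succ']
    have h1 : 3 * (n + (s + 1)) + 1 = 3 * (n + 1 + s) + 1 := by ring
    rw [h1]
    have key : ∑ j ∈ Finset.range n, (catalan (3 * (s + 1 + j) + 2) : ℤ) * (Pmat (n - j)).det
        = ∑ j ∈ Finset.range n, (catalan (3 * (s + (j + 1)) + 2) : ℤ) * (Pmat (n + 1 - (j + 1))).det := by
      apply Finset.sum_congr rfl
      intro j _
      have e1 : 3 * (s + 1 + j) + 2 = 3 * (s + (j + 1)) + 2 := by ring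
      have e2 : n - j = n + 1 - (j + 1) := by omega
      rw [e1, e2]
    rw [key]
    simp only [Nat.add_zero, Nat.sub_zero]
    ring

theorem det_Pmat_recursion :
    ∀ k : ℕ, 1 ≤ k →
      (Pmat k).det =
        (catalan (3 * k - 2) : ℤ) +
          ∑ j ∈ Finset.range (k - 1), (catalan (2 + 3 * j) : ℤ) * (Pmat (k - j - 1)).det := by
  intro k hk
  obtain ⟨n, rfl⟩ : ∃ n, k = n + 1 := ⟨k - 1, by omega⟩
  rw [← Qmat_zero, detQ n 0]
  have h1 : 3 * (n + 0) + 1 = 3 * (n + 1) - 2 := by omega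
  rw [h1]
  congr 1
  simp only [Nat.add_sub_cancel]
  apply Finset.sum_congr rfl
  intro j hj
  simp only [Finset.mem_range] at hj
  have e1 : 3 * (0 + j) + 2 = 2 + 3 * j := by ring
  have e2 : n - j = n + 1 - j - 1 := by omega
  rw [e1, e2]
end

section
/- Fix integers a ≥ 2 and m ≥ a, and let τ_a ∈ S_{2a} be the permutation with τ_a(2i−1) = i and τ_a(2i) = 2a+1−i for 1 ≤ i ≤ a. If σ = σ_1⋯σ_{2m} ∈ S_{2m} has a τ_a-match starting at position 2i+1 for every i with 0 ≤ i ≤ m−a, then σ_{2i−1} = i and σ_{2i} = 2m+1−i for all 1 ≤ i ≤ m; that is, σ_1σ_3⋯σ_{2m−1} = 1 2 ⋯ m and σ_2σ_4⋯σ_{2m} = (2m)(2m−1)⋯(m+1), so σ = τ_m. -/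
open Finset

/-- `σ` has a `τ`-match starting at (0-indexed) position `i`: the factor
`σ_i σ_{i+1} ⋯ σ_{i+j-1}` is order-isomorphic to the pattern `τ` (given in
one-line notation as a function `Fin j → ℕ`). -/
def patMatchAt {n j : ℕ} (τ : Fin j → ℕ) (σ : Equiv.Perm (Fin n)) (i : ℕ) : Prop :=
  ∃ h : i + j ≤ n, ∀ s t : Fin j,
    σ ⟨i + s.1, by have hs := s.2; omega⟩ < σ ⟨i + t.1, by have ht := t.2; omega⟩ ↔ τ s < τ t

/-- The number of descents of the permutation `σ`. -/
noncomputable def desNum {n : ℕ} (σ : Equiv.Perm (Fin n)) : ℕ :=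
  {i : Fin n | ∃ h : i.1 + 1 < n, σ ⟨i.1 + 1, h⟩ < σ i}.ncard

/-- The permutation `τ_a ∈ S_{2a}` in one-line notation: odd positions carry
`1,2,…,a` and even positions carry `2a, 2a-1, …, a+1`. -/
def tauPat (a : ℕ) : Fin (2 * a) → ℕ :=
  fun s => if s.1 % 2 = 0 then s.1 / 2 + 1 else 2 * a - s.1 / 2

/-!
The hypotheses say that every window `σ_{2i+1} ⋯ σ_{2i+2a}` is ordered like `τ_a`, i.e. like the
corresponding window of `τ_m`. Any two positions whose `τ_m`-values are consecutive are at distance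
at most two, hence lie in a common window (this needs `a ≥ 2`). So reading `σ` along the positions
of the values `1, 2, …, 2m` of `τ_m` gives a strictly increasing self-map of `Fin (2m)`, which must
be the identity; that is, `σ = τ_m`.
-/

theorem Fin.strictMono_of_lt_of_val_eq_succ {α : Type*} [Preorder α] {n : ℕ} {f : Fin n → α}
    (h : ∀ i j : Fin n, j.1 = i.1 + 1 → f i < f j) : StrictMono f := by
  cases n with
  | zero => exact fun i => i.elim0
  | succ n => exact Fin.strictMono_iff_lt_succ.2 fun i => h _ _ rfl

theorem patMatchAt.lt_of_lt {n j : ℕ} {τ : Fin j → ℕ} {σ : Equiv.Perm (Fin n)} {i : ℕ}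
    (h : patMatchAt τ σ i) {s t : Fin j} {x y : Fin n} (hx : x.1 = i + s.1) (hy : y.1 = i + t.1)
    (hst : τ s < τ t) : σ x < σ y := by
  obtain ⟨_, hiff⟩ := h
  convert (hiff s t).2 hst

section tauPat

variable {a : ℕ} {s t : Fin (2 * a)}

theorem tauPat_lt_of_even (hs : s.1 % 2 = 0) (ht : t.1 % 2 = 0) (hst : s < t) :
    tauPat a s < tauPat a t := by
  simp only [tauPat, hs, ht, if_true]
  omega

theorem tauPat_lt_of_odd (hs : s.1 % 2 = 1) (ht : t.1 % 2 = 1) (hst : s < t) :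
    tauPat a t < tauPat a s := by
  simp only [tauPat, hs, ht, one_ne_zero, if_false]
  omega

theorem tauPat_lt_of_even_of_odd (hs : s.1 % 2 = 0) (ht : t.1 % 2 = 1) :
    tauPat a s < tauPat a t := by
  simp only [tauPat, hs, ht, one_ne_zero, if_true, if_false]
  omega

end tauPat

/-- `zigzag m j` is the (0-indexed) position of the value `j + 1` in `τ_m`. -/
def zigzag (m : ℕ) (j : Fin (2 * m)) : Fin (2 * m) :=
  ⟨if j.1 < m then 2 * j.1 else 4 * m - 1 - 2 * j.1, by split_ifs <;> omega⟩

section OverlappingMatches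

variable {a m : ℕ} {σ : Equiv.Perm (Fin (2 * m))}

theorem exists_window (ha : 2 ≤ a) (ham : a ≤ m) {x : ℕ} (hx : x < 2 * m) :
    ∃ i, i + a ≤ m ∧ 2 * i ≤ x ∧ min (x + 3) (2 * m) ≤ 2 * i + 2 * a :=
  ⟨min (x / 2) (m - a), by omega, by omega, by omega⟩

theorem apply_lt_apply_of_dist_le_two (ha : 2 ≤ a) (ham : a ≤ m)
    (hmatch : ∀ i : ℕ, i + a ≤ m → patMatchAt (tauPat a) σ (2 * i))
    {x y : Fin (2 * m)} (hxy : x.1 ≤ y.1 + 2) (hyx : y.1 ≤ x.1 + 2)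
    (hτ : ∀ i, ∀ s t : Fin (2 * a), x.1 = 2 * i + s.1 → y.1 = 2 * i + t.1 →
      tauPat a s < tauPat a t) : σ x < σ y := by
  obtain ⟨i, hi, hix, hia⟩ := exists_window ha ham (x := min x.1 y.1) (by omega)
  exact (hmatch i hi).lt_of_lt (s := ⟨x.1 - 2 * i, by omega⟩) (t := ⟨y.1 - 2 * i, by omega⟩)
    (by simp only; omega) (by simp only; omega)
    (hτ i _ _ (by simp only; omega) (by simp only; omega))

theorem strictMono_comp_zigzag (ha : 2 ≤ a) (ham : a ≤ m)
    (hmatch : ∀ i : ℕ, i + a ≤ m → patMatchAt (tauPat a) σ (2 * i)) :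
    StrictMono (σ ∘ zigzag m) := by
  refine Fin.strictMono_of_lt_of_val_eq_succ fun j k hjk => ?_
  simp only [Function.comp_apply]
  apply apply_lt_apply_of_dist_le_two ha ham hmatch <;> simp only [zigzag]
  · split_ifs <;> omega
  · split_ifs <;> omega
  intro i s t hs ht
  split_ifs at hs ht with hj hk hk
  · exact tauPat_lt_of_even (by omega) (by omega) (by omega)
  · exact tauPat_lt_of_even_of_odd (by omega) (by omega)
  · omega
  · exact tauPat_lt_of_odd (by omega) (by omega) (by omega)

end OverlappingMatches

theorem tau_a_overlap_rigidity (a m : ℕ) (ha : 2 ≤ a) (ham : a ≤ m)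
    (σ : Equiv.Perm (Fin (2 * m)))
    (hmatch : ∀ i : ℕ, i + a ≤ m → patMatchAt (tauPat a) σ (2 * i)) :
    ∀ i : ℕ, ∀ hi : i < m,
      (σ ⟨2 * i, by omega⟩).1 = i ∧ (σ ⟨2 * i + 1, by omega⟩).1 = 2 * m - 1 - i := by
  intro i hi
  have hid := strictMono_comp_zigzag ha ham hmatch
  have hlow := congrArg Fin.val (hid.apply_eq (x := ⟨i, by omega⟩))
  have hhigh := congrArg Fin.val (hid.apply_eq (x := ⟨2 * m - 1 - i, by omega⟩))
  simp only [Function.comp_apply, zigzag, hi, if_true] at hlow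
  simp only [Function.comp_apply, zigzag, show ¬ 2 * m - 1 - i < m by omega, if_false,
    show 4 * m - 1 - 2 * (2 * m - 1 - i) = 2 * i + 1 by omega] at hhigh
  exact ⟨hlow, hhigh⟩
end
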